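/- Assume the groups are sorted so that ρ_1 < ρ_2 < ⋯ < ρ_M, and suppose the index m satisfies both f¹_m > 0 and f⁰_m > 0. Then every optimal pushing strategy c* satisfies c*_i = 0 for all i < m, c*_j = 1 for all j > m, and 0 < c*_m < 1 with c*_m the unique solution in (0,1) of the watershed equation at index m. -/

import Mathlib

/-!
Varying one coordinate `c i`, the gain has derivative `t i * exp (-B * T)` times the marginal
gain `B * ρ i * S + 1 - exp (B * T)`, where `S` is the residual demand and `T` the sharing
density. At a maximiser on the cube the marginal gain is `≤ 0` where `c i < 1` and `≥ 0` where
`0 < c i`. Since `S > 0`, it is strictly increasing in `ρ i`, so a group pushed with positive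
probability forces every group with larger `ρ` to be pushed fully: `c` is a threshold strategy.
The marginal gain is antitone in `c`, and at the threshold strategies at `m` with `c m = 1` and
`c m = 0` it equals `-f⁰_m` and `f¹_m`; so the threshold is at `m` with `0 < c m < 1`, where the
marginal gain vanishes. That is the watershed equation, whose two sides are strictly monotone in
opposite directions.
-/

open Function Real

theorem IsMaxOn.hasDerivAt_mul_sub_nonpos {f : ℝ → ℝ} {f' a b : ℝ} {s : Set ℝ}
    (h : IsMaxOn f s a) (hf : HasDerivAt f f' a) (hs : segment ℝ a b ⊆ s) :
    f' * (b - a) ≤ 0 := by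
  simpa [mul_comm] using h.localize.hasFDerivWithinAt_nonpos hf.hasFDerivAt.hasFDerivWithinAt
    (sub_mem_posTangentConeAt_of_segment_subset hs)

theorem IsMaxOn.comp_update {ι α β : Type*} [DecidableEq ι] [Preorder α] [Preorder β]
    {f : (ι → α) → β} {a b c : ι → α} (h : IsMaxOn f (Set.Icc a b) c) (hc : c ∈ Set.Icc a b)
    (i : ι) : IsMaxOn (fun x => f (update c i x)) (Set.Icc (a i) (b i)) (c i) := by
  refine isMaxOn_iff.2 fun x hx => ?_
  rw [update_eq_self]
  exact h ⟨le_update_iff.2 ⟨hx.1, fun j _ => hc.1 j⟩, update_le_iff.2 ⟨hx.2, fun j _ => hc.2 j⟩⟩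

theorem sum_mul_update {ι : Type*} [Fintype ι] [DecidableEq ι] (w c : ι → ℝ) (i : ι) (x : ℝ) :
    ∑ j, w j * update c i x j = ∑ j, w j * c j + w i * (x - c i) := by
  rw [← Finset.add_sum_erase _ _ (Finset.mem_univ i),
    ← Finset.add_sum_erase _ _ (Finset.mem_univ i),
    Finset.sum_congr rfl fun j hj => by rw [update_of_ne (Finset.ne_of_mem_erase hj)],
    update_self]
  ring

section Gain

variable {ι : Type*} [Fintype ι]

def residualDemand (t c : ι → ℝ) : ℝ := ∑ i, t i * (1 - c i)

def sharingDensity (t ρ c : ι → ℝ) : ℝ := ∑ k, t k * ρ k * c k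

noncomputable def offloadingGain (B : ℝ) (t ρ c : ι → ℝ) : ℝ :=
  residualDemand t c * (1 - exp (-B * sharingDensity t ρ c))

/-- The partial derivative of `offloadingGain B t ρ` in `c i` is `t i * exp (-B * T)` times this,
where `T = sharingDensity t ρ c`. -/
noncomputable def marginalGain (B : ℝ) (t ρ c : ι → ℝ) (i : ι) : ℝ :=
  B * ρ i * residualDemand t c + 1 - exp (B * sharingDensity t ρ c)

variable {B : ℝ} {t ρ c d : ι → ℝ}

theorem residualDemand_anti (ht : ∀ i, 0 ≤ t i) (h : c ≤ d) :
    residualDemand t d ≤ residualDemand t c :=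
  Finset.sum_le_sum fun i _ => mul_le_mul_of_nonneg_left (by linarith [h i]) (ht i)

theorem sharingDensity_mono (htρ : ∀ i, 0 ≤ t i * ρ i) (h : c ≤ d) :
    sharingDensity t ρ c ≤ sharingDensity t ρ d :=
  Finset.sum_le_sum fun i _ => mul_le_mul_of_nonneg_left (h i) (htρ i)

theorem marginalGain_anti (hB : 0 ≤ B) (ht : ∀ i, 0 ≤ t i) (hρ : ∀ i, 0 ≤ ρ i) (h : c ≤ d)
    (i : ι) : marginalGain B t ρ d i ≤ marginalGain B t ρ c i := by
  have hS := mul_le_mul_of_nonneg_left (residualDemand_anti ht h) (mul_nonneg hB (hρ i))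
  have hT := exp_le_exp.2 <| mul_le_mul_of_nonneg_left
    (sharingDensity_mono (fun i => mul_nonneg (ht i) (hρ i)) h) hB
  unfold marginalGain
  linarith

section Update

variable [DecidableEq ι]

theorem residualDemand_update (i : ι) (x : ℝ) :
    residualDemand t (update c i x) = residualDemand t c - t i * (x - c i) := by
  simp only [residualDemand, mul_one_sub, Finset.sum_sub_distrib, sum_mul_update]
  ring

theorem sharingDensity_update (i : ι) (x : ℝ) :
    sharingDensity t ρ (update c i x) = sharingDensity t ρ c + t i * ρ i * (x - c i) :=
  sum_mul_update _ _ _ _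

theorem hasDerivAt_offloadingGain_update (i : ι) :
    HasDerivAt (fun x => offloadingGain B t ρ (update c i x))
      (t i * exp (-B * sharingDensity t ρ c) * marginalGain B t ρ c i) (c i) := by
  have hS : HasDerivAt (fun x => residualDemand t c - t i * (x - c i)) (-t i) (c i) := by
    simpa using ((hasDerivAt_id (c i)).sub_const (c i)).const_mul (t i) |>.const_sub _
  have hT : HasDerivAt (fun x => 1 - exp (-B * (sharingDensity t ρ c + t i * ρ i * (x - c i))))
      (B * (t i * ρ i) * exp (-B * sharingDensity t ρ c)) (c i) := by
    have := (((((hasDerivAt_id (c i)).sub_const (c i)).const_mul (t i * ρ i)).const_add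
      (sharingDensity t ρ c)).const_mul (-B)).exp.const_sub 1
    simpa [mul_comm, mul_left_comm] using this
  simp only [offloadingGain, residualDemand_update, sharingDensity_update]
  refine (hS.fun_mul hT).congr_deriv ?_
  have hE : exp (-B * sharingDensity t ρ c) * exp (B * sharingDensity t ρ c) = 1 := by
    rw [← exp_add, neg_mul, neg_add_cancel, exp_zero]
  simp only [marginalGain, sub_self, mul_zero, add_zero, sub_zero]
  linear_combination t i * hE

theorem IsMaxOn.marginalGain_nonpos (hmax : IsMaxOn (offloadingGain B t ρ) (Set.Icc 0 1) c)
    (hc : c ∈ Set.Icc 0 1) {i : ι} (ht : 0 < t i) (hci : c i < 1) :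
    marginalGain B t ρ c i ≤ 0 := by
  have h := (hmax.comp_update hc i).hasDerivAt_mul_sub_nonpos
    (hasDerivAt_offloadingGain_update i)
    ((convex_Icc 0 1).segment_subset ⟨hc.1 i, hc.2 i⟩ ⟨zero_le_one, le_rfl⟩)
  exact nonpos_of_mul_nonpos_right (nonpos_of_mul_nonpos_left h (by simpa using hci))
    (by positivity)

theorem IsMaxOn.marginalGain_nonneg (hmax : IsMaxOn (offloadingGain B t ρ) (Set.Icc 0 1) c)
    (hc : c ∈ Set.Icc 0 1) {i : ι} (ht : 0 < t i) (hci : 0 < c i) :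
    0 ≤ marginalGain B t ρ c i := by
  have h := (hmax.comp_update hc i).hasDerivAt_mul_sub_nonpos
    (hasDerivAt_offloadingGain_update i)
    ((convex_Icc 0 1).segment_subset ⟨hc.1 i, hc.2 i⟩ ⟨le_rfl, zero_le_one⟩)
  rw [zero_sub, mul_neg, neg_nonpos] at h
  exact nonneg_of_mul_nonneg_right (nonneg_of_mul_nonneg_left h hci) (by positivity)

end Update

end Gain

theorem eq_of_watershed_eq {B τ r S K x y : ℝ} (hB : 0 < B) (hτ : 0 < τ) (hr : 0 < r)
    (hx : B * r * (S - τ * x) + 1 = exp (B * K + B * τ * r * x))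
    (hy : B * r * (S - τ * y) + 1 = exp (B * K + B * τ * r * y)) : x = y := by
  have hmono : StrictMono fun z => exp (B * K + B * τ * r * z) - (B * r * (S - τ * z) + 1) := by
    intro z w hzw
    have := exp_lt_exp.2 (show B * K + B * τ * r * z < B * K + B * τ * r * w by gcongr)
    have : B * r * (S - τ * w) < B * r * (S - τ * z) := by gcongr
    dsimp only
    linarith
  exact hmono.injective (by simp only [hx, hy, sub_self])

section Threshold

variable {ι : Type*} [Fintype ι] [LinearOrder ι] {B : ℝ} {t ρ c : ι → ℝ}

theorem IsMaxOn.eq_one_of_lt_of_pos (hmax : IsMaxOn (offloadingGain B t ρ) (Set.Icc 0 1) c)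
    (hc : c ∈ Set.Icc 0 1) (hB : 0 < B) (ht : ∀ i, 0 < t i) (hρ : StrictMono ρ)
    (hS : 0 < residualDemand t c) {i j : ι} (hij : i < j) (hci : 0 < c i) : c j = 1 := by
  by_contra hcj
  have hi := hmax.marginalGain_nonneg hc (ht i) hci
  have hj := hmax.marginalGain_nonpos hc (ht j) ((hc.2 j).lt_of_ne hcj)
  have := mul_lt_mul_of_pos_right (mul_lt_mul_of_pos_left (hρ hij) hB) hS
  unfold marginalGain at hi hj
  linarith

def thresholdStrategy (m : ι) (x : ℝ) (l : ι) : ℝ :=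
  if l < m then 0 else if l = m then x else 1

theorem residualDemand_thresholdStrategy [LocallyFiniteOrderBot ι] (m : ι) (x : ℝ) :
    residualDemand t (thresholdStrategy m x) = ∑ i ∈ Finset.Iic m, t i - t m * x := by
  have h : ∀ l, t l * (1 - thresholdStrategy m x l) =
      (if l ≤ m then t l else 0) - if l = m then t m * x else 0 := by
    intro l
    rcases lt_trichotomy l m with hl | rfl | hl
    · simp [thresholdStrategy, hl, hl.le, hl.ne]
    · simp [thresholdStrategy]; ring
    · simp [thresholdStrategy, hl.not_gt, hl.not_ge, hl.ne']
  simp only [residualDemand, h, Finset.sum_sub_distrib, Finset.sum_ite_eq', Finset.mem_univ,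
    if_true, ← Finset.sum_filter, Finset.filter_ge_eq_Iic]

theorem sharingDensity_thresholdStrategy [LocallyFiniteOrderTop ι] (m : ι) (x : ℝ) :
    sharingDensity t ρ (thresholdStrategy m x) =
      ∑ j ∈ Finset.Ioi m, t j * ρ j + t m * ρ m * x := by
  have h : ∀ l, t l * ρ l * thresholdStrategy m x l =
      (if m < l then t l * ρ l else 0) + if l = m then t m * ρ m * x else 0 := by
    intro l
    rcases lt_trichotomy l m with hl | rfl | hl
    · simp [thresholdStrategy, hl, hl.not_gt, hl.ne]
    · simp [thresholdStrategy]
    · simp [thresholdStrategy, hl, hl.not_gt, hl.ne']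
  simp only [sharingDensity, h, Finset.sum_add_distrib, Finset.sum_ite_eq', Finset.mem_univ,
    if_true, ← Finset.sum_filter, Finset.filter_lt_eq_Ioi]

theorem marginalGain_thresholdStrategy [LocallyFiniteOrderBot ι] [LocallyFiniteOrderTop ι]
    (m : ι) (x : ℝ) :
    marginalGain B t ρ (thresholdStrategy m x) m =
      B * ρ m * ((∑ i ∈ Finset.Iic m, t i) - t m * x) + 1 -
        exp (B * (∑ j ∈ Finset.Ioi m, t j * ρ j) + B * t m * ρ m * x) := by
  simp only [marginalGain, residualDemand_thresholdStrategy, sharingDensity_thresholdStrategy,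
    mul_add, ← mul_assoc]

variable [LocallyFiniteOrderBot ι] [LocallyFiniteOrderTop ι]
  (hmax : IsMaxOn (offloadingGain B t ρ) (Set.Icc 0 1) c) (hc : c ∈ Set.Icc 0 1)
  (ht : ∀ i, 0 < t i) {m : ι}
include hmax hc ht

theorem IsMaxOn.not_forall_ge_eq_one (hB : 0 ≤ B) (hρ : ∀ i, 0 ≤ ρ i)
    (hf0 : 0 < exp (B * ∑ j ∈ Finset.Ici m, t j * ρ j) -
      B * ρ m * (∑ i ∈ Finset.Iio m, t i) - 1) :
    ¬ ∀ l, m ≤ l → c l = 1 := by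
  intro h
  have hle : thresholdStrategy m 1 ≤ c := fun l => by
    unfold thresholdStrategy
    split_ifs with hlm
    exacts [hc.1 l, (h l (not_lt.1 hlm)).ge, (h l (not_lt.1 hlm)).ge]
  have h1 := hmax.marginalGain_nonneg hc (ht m) (by rw [h m le_rfl]; exact one_pos)
  have h2 := marginalGain_anti hB (fun i => (ht i).le) hρ hle m
  simp only [marginalGain_thresholdStrategy, mul_one] at h2
  rw [← Finset.Iio_insert, Finset.sum_insert Finset.notMem_Iio_self] at h2
  rw [← Finset.Ioi_insert, Finset.sum_insert Finset.notMem_Ioi_self, mul_add, add_comm,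
    ← mul_assoc] at hf0
  linarith

theorem IsMaxOn.not_forall_le_eq_zero (hB : 0 ≤ B) (hρ : ∀ i, 0 ≤ ρ i)
    (hf1 : 0 < 1 + B * ρ m * (∑ i ∈ Finset.Iic m, t i) -
      exp (B * ∑ j ∈ Finset.Ioi m, t j * ρ j)) :
    ¬ ∀ l, l ≤ m → c l = 0 := by
  intro h
  have hle : c ≤ thresholdStrategy m 0 := fun l => by
    unfold thresholdStrategy
    split_ifs with hlm hlm'
    exacts [(h l hlm.le).le, (h l hlm'.le).le, hc.2 l]
  have h1 := hmax.marginalGain_nonpos hc (ht m) (by rw [h m le_rfl]; exact one_pos)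
  have h2 := marginalGain_anti hB (fun i => (ht i).le) hρ hle m
  simp only [marginalGain_thresholdStrategy, mul_zero, sub_zero, add_zero] at h2
  linarith

theorem IsMaxOn.residualDemand_pos (hB : 0 ≤ B) (hρ : ∀ i, 0 ≤ ρ i)
    (hf0 : 0 < exp (B * ∑ j ∈ Finset.Ici m, t j * ρ j) -
      B * ρ m * (∑ i ∈ Finset.Iio m, t i) - 1) :
    0 < residualDemand t c := by
  have hterm : ∀ i ∈ Finset.univ, 0 ≤ t i * (1 - c i) :=
    fun i _ => mul_nonneg (ht i).le (sub_nonneg.2 (hc.2 i))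
  refine (Finset.sum_nonneg hterm).lt_of_ne' fun hS => hmax.not_forall_ge_eq_one hc ht hB hρ hf0
    fun l _ => ?_
  have := (Finset.sum_eq_zero_iff_of_nonneg hterm).1 hS l (Finset.mem_univ l)
  rw [mul_eq_zero, sub_eq_zero] at this
  exact (this.resolve_left (ht l).ne').symm

theorem IsMaxOn.threshold_structure (hB : 0 < B) (hρ : StrictMono ρ) (hρ0 : ∀ i, 0 ≤ ρ i)
    (hf1 : 0 < 1 + B * ρ m * (∑ i ∈ Finset.Iic m, t i) -
      exp (B * ∑ j ∈ Finset.Ioi m, t j * ρ j))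
    (hf0 : 0 < exp (B * ∑ j ∈ Finset.Ici m, t j * ρ j) -
      B * ρ m * (∑ i ∈ Finset.Iio m, t i) - 1) :
    (∀ i, i < m → c i = 0) ∧ (∀ j, m < j → c j = 1) ∧ 0 < c m ∧ c m < 1 := by
  have hone := hmax.not_forall_ge_eq_one hc ht hB.le hρ0 hf0
  have hzero := hmax.not_forall_le_eq_zero hc ht hB.le hρ0 hf1
  have hup : ∀ i j, i < j → 0 < c i → c j = 1 := fun i j =>
    hmax.eq_one_of_lt_of_pos hc hB ht hρ (hmax.residualDemand_pos hc ht hB.le hρ0 hf0)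
  have hlow : ∀ i, i < m → c i = 0 := fun i him => by_contra fun hi =>
    hone fun l hl => hup i l (him.trans_le hl) ((hc.1 i).lt_of_ne' hi)
  have hhigh : ∀ j, m < j → c j = 1 := fun j hmj => by_contra fun hj =>
    hzero fun l hl => by_contra fun hl0 => hj (hup l j (hl.trans_lt hmj) ((hc.1 l).lt_of_ne' hl0))
  refine ⟨hlow, hhigh, (hc.1 m).lt_of_ne' fun h0 => hzero fun l hl => ?_,
    (hc.2 m).lt_of_ne fun h1 => hone fun l hl => ?_⟩
  · rcases hl.lt_or_eq with hl | rfl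
    exacts [hlow l hl, h0]
  · rcases hl.lt_or_eq' with hl | rfl
    exacts [hhigh l hl, h1]

end Threshold

theorem stmt_5_general (M : ℕ) (B : ℝ) (hB : 0 < B)
    (t ρ : Fin M → ℝ) (ht : ∀ i, 0 < t i) (hρ : ∀ i, 0 < ρ i ∧ ρ i ≤ 1)
    (hsort : StrictMono ρ) (m : Fin M)
    (hf1 : 0 < 1 + B * ρ m * (∑ i ∈ Finset.Iic m, t i) -
      Real.exp (B * ∑ j ∈ Finset.Ioi m, t j * ρ j))
    (hf0 : 0 < Real.exp (B * ∑ j ∈ Finset.Ici m, t j * ρ j) -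
      B * ρ m * (∑ i ∈ Finset.Iio m, t i) - 1)
    (c : Fin M → ℝ) (hc : ∀ i, 0 ≤ c i ∧ c i ≤ 1)
    (hopt : ∀ d : Fin M → ℝ, (∀ i, 0 ≤ d i ∧ d i ≤ 1) →
      (∑ i, t i * (1 - d i)) * (1 - Real.exp (-B * ∑ k, t k * ρ k * d k)) ≤
      (∑ i, t i * (1 - c i)) * (1 - Real.exp (-B * ∑ k, t k * ρ k * c k))) :
    (∀ i : Fin M, i < m → c i = 0) ∧ (∀ j : Fin M, m < j → c j = 1) ∧
    (0 < c m ∧ c m < 1) ∧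
    (B * ρ m * ((∑ i ∈ Finset.Iic m, t i) - t m * c m) + 1 =
      Real.exp (B * (∑ j ∈ Finset.Ioi m, t j * ρ j) + B * t m * ρ m * c m)) ∧
    (∀ x : ℝ, 0 < x → x < 1 →
      B * ρ m * ((∑ i ∈ Finset.Iic m, t i) - t m * x) + 1 =
        Real.exp (B * (∑ j ∈ Finset.Ioi m, t j * ρ j) + B * t m * ρ m * x) →
      x = c m) := by
  have hcube : c ∈ Set.Icc 0 1 := ⟨fun i => (hc i).1, fun i => (hc i).2⟩
  have hmax : IsMaxOn (offloadingGain B t ρ) (Set.Icc 0 1) c :=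
    fun d hd => hopt d fun i => ⟨hd.1 i, hd.2 i⟩
  obtain ⟨hlow, hhigh, hpos, hlt⟩ :=
    hmax.threshold_structure hcube ht hB hsort (fun i => (hρ i).1.le) hf1 hf0
  have hthreshold : thresholdStrategy m (c m) = c := funext fun l => by
    unfold thresholdStrategy
    split_ifs with hlm hlm'
    exacts [(hlow l hlm).symm, hlm' ▸ rfl, (hhigh l ((not_lt.1 hlm).lt_of_ne' hlm')).symm]
  have hwatershed : marginalGain B t ρ c m = 0 :=
    (hmax.marginalGain_nonpos hcube (ht m) hlt).antisymm
      (hmax.marginalGain_nonneg hcube (ht m) hpos)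
  rw [← hthreshold, marginalGain_thresholdStrategy, sub_eq_zero] at hwatershed
  exact ⟨hlow, hhigh, ⟨hpos, hlt⟩, hwatershed,
    fun x _ _ hx => eq_of_watershed_eq hB (ht m) (hρ m).1 hx hwatershed⟩

/-- With groups sorted in strictly increasing order of sharing
probability, if index `m` satisfies `f¹_m > 0` and `f⁰_m > 0`, then every optimal
pushing strategy pushes with probability 0 below `m`, 1 above `m`, and `c m` is the
unique solution in `(0,1)` of the watershed equation. -/
theorem stmt_5 (M : ℕ) (hM : 1 ≤ M) (B : ℝ) (hB : 0 < B)
    (t ρ : Fin M → ℝ) (ht : ∀ i, 0 < t i) (hρ : ∀ i, 0 < ρ i ∧ ρ i ≤ 1)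
    (hsort : StrictMono ρ) (m : Fin M)
    (hf1 : 0 < 1 + B * ρ m * (∑ i ∈ Finset.Iic m, t i) -
      Real.exp (B * ∑ j ∈ Finset.Ioi m, t j * ρ j))
    (hf0 : 0 < Real.exp (B * ∑ j ∈ Finset.Ici m, t j * ρ j) -
      B * ρ m * (∑ i ∈ Finset.Iio m, t i) - 1)
    (c : Fin M → ℝ) (hc : ∀ i, 0 ≤ c i ∧ c i ≤ 1)
    (hopt : ∀ d : Fin M → ℝ, (∀ i, 0 ≤ d i ∧ d i ≤ 1) →
      (∑ i, t i * (1 - d i)) * (1 - Real.exp (-B * ∑ k, t k * ρ k * d k)) ≤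
      (∑ i, t i * (1 - c i)) * (1 - Real.exp (-B * ∑ k, t k * ρ k * c k))) :
    (∀ i : Fin M, i < m → c i = 0) ∧ (∀ j : Fin M, m < j → c j = 1) ∧
    (0 < c m ∧ c m < 1) ∧
    (B * ρ m * ((∑ i ∈ Finset.Iic m, t i) - t m * c m) + 1 =
      Real.exp (B * (∑ j ∈ Finset.Ioi m, t j * ρ j) + B * t m * ρ m * c m)) ∧
    (∀ x : ℝ, 0 < x → x < 1 →
      B * ρ m * ((∑ i ∈ Finset.Iic m, t i) - t m * x) + 1 =
        Real.exp (B * (∑ j ∈ Finset.Ioi m, t j * ρ j) + B * t m * ρ m * x) →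
      x = c m) :=
  stmt_5_general M B hB t ρ ht hρ hsort m hf1 hf0 c hc hopt
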